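/- arXiv:2207.00109 — 5 statements merged into one kernel-verified Lean document; each statement's English description precedes it below -/
import Mathlib

section
/- Let V₀ be a d×d symmetric positive definite matrix and b₁,…,b_T ∈ ℝ^d. Define V_t = V₀ + Σ_{s=1}^t b_s b_sᵀ. Then det(V_T)/det(V₀) = Π_{t=1}^T (1 + ‖b_t‖²_{V_{t-1}⁻¹}), where ‖x‖²_{V⁻¹} = xᵀ V⁻¹ x. -/
open Matrix

lemma vecMulVec_posSemidef {d : ℕ} (v : Fin d → ℝ) :
    (Matrix.vecMulVec v v).PosSemidef := by
  rw [vecMulVec_eq Unit]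
  have : (replicateCol Unit v)ᴴ = replicateRow Unit v := by
    ext i j; simp [conjTranspose_apply]
  rw [← this]
  exact posSemidef_self_mul_conjTranspose _

lemma Vt_posDef {d : ℕ} (V₀ : Matrix (Fin d) (Fin d) ℝ) (hV₀ : V₀.PosDef)
    (b : ℕ → Fin d → ℝ) (t : ℕ) :
    (V₀ + ∑ s ∈ Finset.range t, Matrix.vecMulVec (b s) (b s)).PosDef := by
  refine hV₀.add_posSemidef ?_
  induction t with
  | zero => simpa using Matrix.PosSemidef.zero
  | succ n ih =>
      rw [Finset.sum_range_succ]
      exact ih.add (vecMulVec_posSemidef _)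

lemma det_add_vecMulVec {d : ℕ} (V : Matrix (Fin d) (Fin d) ℝ) (hV : V.PosDef)
    (u : Fin d → ℝ) :
    (V + Matrix.vecMulVec u u).det = V.det * (1 + u ⬝ᵥ V⁻¹ *ᵥ u) := by
  have hdet : IsUnit V.det := isUnit_iff_ne_zero.2 hV.det_pos.ne'
  rw [vecMulVec_eq Unit, det_add_replicateCol_mul_replicateRow hdet]
  congr 1
  rw [Matrix.mul_assoc, ← replicateCol_mulVec, det_unique]
  simp [Matrix.replicateRow_mul_replicateCol_apply]

theorem stmt_4 {d : ℕ} (T : ℕ) (V₀ : Matrix (Fin d) (Fin d) ℝ) (hV₀ : V₀.PosDef)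
    (b : ℕ → Fin d → ℝ) :
    (V₀ + ∑ s ∈ Finset.range T, Matrix.vecMulVec (b s) (b s)).det / V₀.det =
      ∏ t ∈ Finset.range T,
        (1 + b t ⬝ᵥ (V₀ + ∑ s ∈ Finset.range t, Matrix.vecMulVec (b s) (b s))⁻¹ *ᵥ b t) := by
  induction T with
  | zero => simp [div_self hV₀.det_pos.ne']
  | succ n ih =>
      rw [Finset.sum_range_succ, ← add_assoc, Finset.prod_range_succ, ← ih,
        det_add_vecMulVec _ (Vt_posDef V₀ hV₀ b n)]
      field_simp
end

section
/- Let V₀ be a d×d symmetric positive definite matrix and b₁,…,b_T ∈ ℝ^d a sequence of vectors. Define V_t = V₀ + Σ_{s=1}^t b_s b_sᵀ for t ∈ [T]. Then Σ_{t=1}^T min{1, ‖b_t‖²_{V_{t-1}⁻¹}} ≤ 2·log(det(V_T)/det(V₀)). -/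
open Matrix

private lemma min_le_two_log {u : ℝ} (hu : 0 ≤ u) : min 1 u ≤ 2 * Real.log (1 + u) := by
  have h1 : (0:ℝ) < 1 + u := by linarith
  rcases le_total u 1 with h | h
  · rw [min_eq_right h]
    have h2 := Real.log_le_sub_one_of_pos (inv_pos.mpr h1)
    rw [Real.log_inv] at h2
    have h3 : (1+u)⁻¹ ≤ 1 - u/2 := by
      rw [inv_le_iff_one_le_mul₀ h1]
      nlinarith
    linarith
  · rw [min_eq_left h]
    have hs : Real.exp (1/2) * Real.exp (1/2) = Real.exp 1 := by
      rw [← Real.exp_add]; norm_num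
    have he : Real.exp (1/2) < 2 := by
      nlinarith [Real.exp_one_lt_d9, Real.exp_pos (1/2)]
    have hl2 : (1:ℝ)/2 ≤ Real.log 2 :=
      (Real.le_log_iff_exp_le (by norm_num)).mpr he.le
    have : Real.log 2 ≤ Real.log (1 + u) :=
      Real.log_le_log (by norm_num) (by linarith)
    linarith

theorem stmt_5 {d : ℕ} (T : ℕ) (V₀ : Matrix (Fin d) (Fin d) ℝ) (hV₀ : V₀.PosDef)
    (b : ℕ → Fin d → ℝ) :
    ∑ t ∈ Finset.range T,
        min 1 (b t ⬝ᵥ (V₀ + ∑ s ∈ Finset.range t, Matrix.vecMulVec (b s) (b s))⁻¹ *ᵥ b t) ≤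
      2 * Real.log
        ((V₀ + ∑ s ∈ Finset.range T, Matrix.vecMulVec (b s) (b s)).det / V₀.det) := by
  set W : ℕ → Matrix (Fin d) (Fin d) ℝ :=
    fun t => V₀ + ∑ s ∈ Finset.range t, Matrix.vecMulVec (b s) (b s) with hWdef
  have key : ∀ t, (V₀ + ∑ s ∈ Finset.range t, Matrix.vecMulVec (b s) (b s)) = W t :=
    fun t => rfl
  simp only [key]
  -- positive definiteness
  have hpsd : ∀ s, (Matrix.vecMulVec (b s) (b s)).PosSemidef := by
    intro s
    rw [Matrix.vecMulVec_eq (Fin 1)]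
    have := Matrix.posSemidef_conjTranspose_mul_self (Matrix.replicateRow (Fin 1) (b s))
    convert this using 1
    ext i j; simp [Matrix.mul_apply]
  have hWpd : ∀ t, (W t).PosDef := by
    intro t
    refine hV₀.add_posSemidef ?_
    exact Finset.sum_induction _ _ (fun a c ha hc => ha.add hc)
      (Matrix.PosSemidef.zero) (fun s _ => hpsd s)
  have hdetpos : ∀ t, 0 < (W t).det := fun t => (hWpd t).det_pos
  set u : ℕ → ℝ := fun t => b t ⬝ᵥ (W t)⁻¹ *ᵥ b t with hu
  have hunn : ∀ t, 0 ≤ u t := by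
    intro t
    have := ((hWpd t).inv).posSemidef.dotProduct_mulVec_nonneg (b t)
    simpa using this
  -- determinant identity
  have hdet : ∀ t, (W (t+1)).det = (W t).det * (1 + u t) := by
    intro t
    have hinv : W t * (W t)⁻¹ = 1 :=
      Matrix.mul_nonsing_inv _ (isUnit_iff_ne_zero.mpr (hdetpos t).ne')
    have hWt : W (t+1) =
        W t * (1 + (W t)⁻¹ * (Matrix.replicateCol (Fin 1) (b t) * Matrix.replicateRow (Fin 1) (b t))) := by
      rw [Matrix.mul_add, Matrix.mul_one, ← Matrix.mul_assoc, hinv, Matrix.one_mul]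
      simp only [hWdef, Finset.sum_range_succ, ← Matrix.vecMulVec_eq (Fin 1), add_assoc]
      congr 2; ext i j; simp [vecMulVec, Matrix.mul_apply]
    rw [hWt, Matrix.det_mul]
    congr 1
    rw [← Matrix.mul_assoc, ← Matrix.replicateCol_mulVec]
    convert Matrix.det_one_add_replicateCol_mul_replicateRow (ι := Fin 1) _ _
    rfl
  have hlog : ∀ t, Real.log (1 + u t) =
      Real.log (W (t+1)).det - Real.log (W t).det := by
    intro t
    rw [hdet t, Real.log_mul (hdetpos t).ne' (by have := hunn t; intro h; linarith)]
    ring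
  calc ∑ t ∈ Finset.range T, min 1 (u t)
      ≤ ∑ t ∈ Finset.range T, 2 * Real.log (1 + u t) :=
        Finset.sum_le_sum fun t _ => min_le_two_log (hunn t)
    _ = 2 * ∑ t ∈ Finset.range T,
          (Real.log (W (t+1)).det - Real.log (W t).det) := by
        rw [Finset.mul_sum]
        exact Finset.sum_congr rfl fun t _ => by rw [hlog t]
    _ = 2 * (Real.log (W T).det - Real.log (W 0).det) := by
        rw [Finset.sum_range_sub (fun n => Real.log (W n).det)]
    _ = 2 * Real.log ((W T).det / V₀.det) := by
        have hW0 : W 0 = V₀ := by simp [hWdef]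
        rw [hW0, Real.log_div (hdetpos T).ne' hV₀.det_pos.ne']
end

section
/- Let V₀ be a d×d symmetric positive definite matrix and b₁,…,b_T ∈ ℝ^d with ‖b_t‖₂ ≤ M for all t. Define V_T = V₀ + Σ_{s=1}^T b_s b_sᵀ. Then 2·log(det(V_T)/det(V₀)) ≤ 2d·log((tr(V₀) + T·M²)/(d·det(V₀)^{1/d})). -/
open Matrix

lemma trace_eq_sum_eigenvalues' {n : Type*} [Fintype n] [DecidableEq n] {A : Matrix n n ℝ}
    (hA : A.IsHermitian) : A.trace = ∑ i, hA.eigenvalues i := by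
  simpa using hA.trace_eq_sum_eigenvalues

lemma posSemidef_vecMulVec' {n : Type*} [Fintype n] [DecidableEq n] (v : n → ℝ) :
    (Matrix.vecMulVec v v).PosSemidef := by
  refine posSemidef_iff_dotProduct_mulVec.mpr ⟨?_, fun x => ?_⟩
  · ext i j; simp [Matrix.IsHermitian, conjTranspose_apply, vecMulVec_apply, mul_comm]
  · have h : star x ⬝ᵥ (vecMulVec v v *ᵥ x) = (∑ i, v i * x i) ^ 2 := by
      rw [sq, Finset.sum_mul_sum]
      simp only [dotProduct, mulVec, vecMulVec_apply, star_trivial]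
      rw [Finset.sum_comm]
      apply Finset.sum_congr rfl; intro i _
      rw [Finset.mul_sum]
      apply Finset.sum_congr rfl; intro j _; ring
    rw [h]; positivity

theorem stmt_6 {d : ℕ} (hd : 0 < d) (T : ℕ) (M : ℝ)
    (V₀ : Matrix (Fin d) (Fin d) ℝ) (hV₀ : V₀.PosDef)
    (b : ℕ → EuclideanSpace ℝ (Fin d)) (hb : ∀ t, ‖b t‖ ≤ M) :
    2 * Real.log ((V₀ + ∑ s ∈ Finset.range T, Matrix.vecMulVec (b s) (b s)).det / V₀.det) ≤
      2 * d * Real.log ((V₀.trace + T * M ^ 2) / (d * V₀.det ^ ((1 : ℝ) / d))) := by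
  have hdR : (0:ℝ) < d := Nat.cast_pos.mpr hd
  have hdne : (d:ℝ) ≠ 0 := ne_of_gt hdR
  set A : Matrix (Fin d) (Fin d) ℝ := V₀ + ∑ s ∈ Finset.range T, Matrix.vecMulVec (b s) (b s)
    with hAdef
  have hS : (∑ s ∈ Finset.range T, Matrix.vecMulVec (b s) (b s)).PosSemidef :=
    Finset.sum_induction _ (fun X : Matrix (Fin d) (Fin d) ℝ => X.PosSemidef) (fun x y hx hy => hx.add hy)
      Matrix.PosSemidef.zero (fun i _ => posSemidef_vecMulVec' _)
  have hA : A.PosDef := hV₀.add_posSemidef hS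
  -- trace bound
  have htr_bound : A.trace ≤ V₀.trace + T * M ^ 2 := by
    rw [hAdef, Matrix.trace_add, Matrix.trace_sum]
    have : ∑ s ∈ Finset.range T, (Matrix.vecMulVec (b s) (b s)).trace ≤
        ∑ s ∈ Finset.range T, M ^ 2 := by
      apply Finset.sum_le_sum
      intro s _
      have h1 : (Matrix.vecMulVec (b s) (b s)).trace = ‖b s‖ ^ 2 := by
        rw [EuclideanSpace.norm_eq, Real.sq_sqrt (by positivity)]
        simp [Matrix.trace, Matrix.diag, vecMulVec_apply, sq, Real.norm_eq_abs,
          abs_mul_abs_self]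
      rw [h1]
      exact pow_le_pow_left₀ (norm_nonneg _) (hb s) 2
    simpa using add_le_add_left (le_trans this (by simp [Finset.sum_const])) V₀.trace
  -- eigenvalue facts
  have htr : A.trace = ∑ i, hA.1.eigenvalues i := trace_eq_sum_eigenvalues' hA.1
  have hdet : A.det = ∏ i, hA.1.eigenvalues i := by
    simpa using hA.1.det_eq_prod_eigenvalues
  have htrpos : 0 < A.trace := by
    rw [htr]
    exact Finset.sum_pos (fun i _ => hA.eigenvalues_pos i) ⟨⟨0, hd⟩, Finset.mem_univ _⟩
  have hdetA : 0 < A.det := hA.det_pos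
  have hdetV : 0 < V₀.det := hV₀.det_pos
  -- AM-GM : det A ≤ (trace A / d)^d
  have hamgm : A.det ^ ((1:ℝ)/d) ≤ A.trace / d := by
    have := Real.geom_mean_le_arith_mean_weighted Finset.univ (fun _ => (1:ℝ)/d)
      hA.1.eigenvalues (fun i _ => by positivity)
      (by simp [Finset.sum_const, Finset.card_univ, mul_one_div, hdne])
      (fun i _ => (hA.eigenvalues_pos i).le)
    calc A.det ^ ((1:ℝ)/d) = ∏ i, hA.1.eigenvalues i ^ ((1:ℝ)/d) := by
          rw [hdet, ← Real.finset_prod_rpow _ _ (fun i _ => (hA.eigenvalues_pos i).le)]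
      _ ≤ ∑ i, (1:ℝ)/d * hA.1.eigenvalues i := this
      _ = A.trace / d := by rw [htr, Finset.sum_div]; exact Finset.sum_congr rfl (fun i _ => by ring)
  have hkey : A.det ≤ (A.trace / d) ^ d := by
    have h2 := pow_le_pow_left₀ (Real.rpow_nonneg hdetA.le _) hamgm d
    rwa [← Real.rpow_natCast (A.det ^ ((1:ℝ)/d)) d, ← Real.rpow_mul hdetA.le,
      one_div_mul_cancel hdne, Real.rpow_one] at h2
  -- r^d
  set r : ℝ := (V₀.trace + T * M ^ 2) / (d * V₀.det ^ ((1:ℝ)/d)) with hrdef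
  have hrpow : r ^ d = (V₀.trace + T * M ^ 2) ^ d / ((d:ℝ) ^ d * V₀.det) := by
    rw [hrdef, div_pow, mul_pow, ← Real.rpow_natCast (V₀.det ^ ((1:ℝ)/d)) d,
      ← Real.rpow_mul hdetV.le, one_div_mul_cancel hdne, Real.rpow_one]
  have hfinal : A.det / V₀.det ≤ r ^ d := by
    rw [hrpow, div_le_div_iff₀ hdetV (by positivity)]
    calc A.det * ((d:ℝ)^d * V₀.det) ≤ (A.trace / d) ^ d * ((d:ℝ)^d * V₀.det) := by
          apply mul_le_mul_of_nonneg_right hkey (by positivity)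
      _ = A.trace ^ d * V₀.det := by
          rw [div_pow]; field_simp
      _ ≤ (V₀.trace + T * M ^ 2) ^ d * V₀.det := by
          apply mul_le_mul_of_nonneg_right _ hdetV.le
          exact pow_le_pow_left₀ htrpos.le htr_bound d
  have hlog : Real.log (A.det / V₀.det) ≤ d * Real.log r := by
    calc Real.log (A.det / V₀.det) ≤ Real.log (r ^ d) :=
          Real.log_le_log (div_pos hdetA hdetV) hfinal
      _ = d * Real.log r := by rw [Real.log_pow]
  nlinarith [hlog]
end

section
/- Let M and V be symmetric positive definite d×d matrices with M ⪰ c·V for some c > 0 (i.e., M − c·V is positive semidefinite). Then for all x ∈ ℝ^d, ‖x‖_{M V⁻¹ M} ≥ c·‖x‖_V, where ‖x‖_A = (xᵀ A x)^{1/2}. -/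
open Matrix

theorem stmt_10 {d : ℕ} (M V : Matrix (Fin d) (Fin d) ℝ)
    (hM : M.PosDef) (hV : V.PosDef) (c : ℝ) (hc : 0 < c)
    (h : (M - c • V).PosSemidef) (x : Fin d → ℝ) :
    c * Real.sqrt (x ⬝ᵥ V *ᵥ x) ≤ Real.sqrt (x ⬝ᵥ (M * V⁻¹ * M) *ᵥ x) := by
  have hVinv : (V⁻¹).PosDef := hV.inv
  set S := M - c • V with hS
  have hSherm : S.IsHermitian := h.1
  have h1 : (Sᴴ * V⁻¹ * S).PosSemidef := hVinv.posSemidef.conjTranspose_mul_mul_same S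
  have h2 : ((2 * c) • S).PosSemidef := by
    refine Matrix.PosSemidef.of_dotProduct_mulVec_nonneg ?_ ?_
    · rw [Matrix.IsHermitian, Matrix.conjTranspose_smul, hSherm.eq, star_trivial]
    · intro y
      have := h.dotProduct_mulVec_nonneg y
      simp only [Matrix.smul_mulVec, dotProduct_smul, star_trivial,
        smul_eq_mul] at this ⊢
      positivity
  have hkey : (M * V⁻¹ * M - (c ^ 2) • V).PosSemidef := by
    have hsum := h1.add h2
    have heq : Sᴴ * V⁻¹ * S + (2 * c) • S = M * V⁻¹ * M - (c ^ 2) • V := by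
      have hVV : V * V⁻¹ = 1 := Matrix.mul_nonsing_inv V hV.det_pos.ne'.isUnit
      have hVV' : V⁻¹ * V = 1 := Matrix.nonsing_inv_mul V hV.det_pos.ne'.isUnit
      have hH : Sᴴ = S := hSherm.eq
      rw [hH, hS]
      simp only [Matrix.sub_mul, Matrix.mul_sub, Matrix.smul_mul, Matrix.mul_smul,
        hVV, hVV', smul_smul, Matrix.mul_one, Matrix.one_mul, smul_sub]
      rw [Matrix.mul_assoc M V⁻¹ V, hVV', Matrix.mul_one]
      module
    rwa [heq] at hsum
  have hquad : c ^ 2 * (x ⬝ᵥ V *ᵥ x) ≤ x ⬝ᵥ (M * V⁻¹ * M) *ᵥ x := by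
    have := hkey.dotProduct_mulVec_nonneg x
    simp only [Matrix.sub_mulVec, Matrix.smul_mulVec, dotProduct_sub,
      dotProduct_smul, star_trivial, smul_eq_mul] at this
    linarith
  calc c * Real.sqrt (x ⬝ᵥ V *ᵥ x) = Real.sqrt (c ^ 2 * (x ⬝ᵥ V *ᵥ x)) := by
        rw [Real.sqrt_mul (by positivity), Real.sqrt_sq hc.le]
    _ ≤ _ := Real.sqrt_le_sqrt hquad
end

section
/- Let f: ℝ → ℝ be continuously differentiable with c₁ ≤ f'(u) for all u, where c₁ > 0. Fix vectors x₁,…,x_t ∈ ℝ^d and λ > 0, and define g(θ) = λθ + Σ_{s=1}^t f(⟨θ, x_s⟩)·x_s and V_t = λI + Σ_{s=1}^t x_s x_sᵀ. Then for any θ, θ' ∈ ℝ^d, c₁·‖θ − θ'‖_{V_t} ≤ ‖g(θ) − g(θ')‖_{V_t⁻¹}, where ‖x‖_A = (xᵀ A x)^{1/2}. -/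
open Matrix

private lemma my_sum_mulVec {d : ℕ} {ι : Type*} (s : Finset ι)
    (M : ι → Matrix (Fin d) (Fin d) ℝ) (v : Fin d → ℝ) :
    (∑ i ∈ s, M i) *ᵥ v = ∑ i ∈ s, M i *ᵥ v := by
  induction s using Finset.cons_induction with
  | empty => simp
  | cons a s ha ih => simp [Matrix.add_mulVec, ih]

private lemma my_dotProduct_sum {d : ℕ} {ι : Type*} (s : Finset ι)
    (w : ι → Fin d → ℝ) (v : Fin d → ℝ) :
    v ⬝ᵥ (∑ i ∈ s, w i) = ∑ i ∈ s, v ⬝ᵥ w i := by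
  induction s using Finset.cons_induction with
  | empty => simp
  | cons a s ha ih => simp [dotProduct_add, ih]

private lemma my_vecMulVec_mulVec {d : ℕ} (a b v : Fin d → ℝ) :
    vecMulVec a b *ᵥ v = (b ⬝ᵥ v) • a := by
  funext i
  simp only [vecMulVec, mulVec, dotProduct, Matrix.of_apply, Pi.smul_apply, smul_eq_mul,
    Finset.sum_mul]
  exact Finset.sum_congr rfl fun j _ => by ring

private lemma my_cs {d : ℕ} (u v : Fin d → ℝ) :
    u ⬝ᵥ v ≤ Real.sqrt (u ⬝ᵥ u) * Real.sqrt (v ⬝ᵥ v) := by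
  simpa [dotProduct, sq] using Real.sum_mul_le_sqrt_mul_sqrt Finset.univ u v

private lemma my_mvt {f : ℝ → ℝ} (hf : ContDiff ℝ 1 f) {c₁ : ℝ}
    (hderiv : ∀ u, c₁ ≤ deriv f u) (a b : ℝ) :
    c₁ * (a - b) ^ 2 ≤ (f a - f b) * (a - b) := by
  have hdiff : Differentiable ℝ f := hf.differentiable one_ne_zero
  have key : ∀ p q : ℝ, p < q → c₁ * (q - p) ^ 2 ≤ (f q - f p) * (q - p) := by
    intro p q hpq
    obtain ⟨c, _, hc⟩ := exists_hasDerivAt_eq_slope f (deriv f) hpq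
      hdiff.continuous.continuousOn (fun y _ => (hdiff y).hasDerivAt)
    rw [eq_div_iff (by linarith : q - p ≠ 0)] at hc
    nlinarith [hderiv c, sq_nonneg (q - p)]
  rcases lt_trichotomy a b with h | h | h
  · nlinarith [key a b h]
  · simp [h]
  · nlinarith [key b a h]

theorem stmt_11 {d t : ℕ} (f : ℝ → ℝ) (hf : ContDiff ℝ 1 f)
    (c₁ : ℝ) (hc₁ : 0 < c₁) (hc₁' : c₁ ≤ 1) (hderiv : ∀ u, c₁ ≤ deriv f u)
    (x : Fin t → Fin d → ℝ) (lam : ℝ) (hlam : 0 < lam)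
    (g : (Fin d → ℝ) → Fin d → ℝ)
    (hg : ∀ θ, g θ = lam • θ + ∑ s, f (θ ⬝ᵥ x s) • x s)
    (Vt : Matrix (Fin d) (Fin d) ℝ)
    (hVt : Vt = lam • (1 : Matrix (Fin d) (Fin d) ℝ) + ∑ s, Matrix.vecMulVec (x s) (x s))
    (θ θ' : Fin d → ℝ) :
    c₁ * Real.sqrt ((θ - θ') ⬝ᵥ Vt *ᵥ (θ - θ')) ≤
      Real.sqrt ((g θ - g θ') ⬝ᵥ Vt⁻¹ *ᵥ (g θ - g θ')) := by
  set Δ : Fin d → ℝ := θ - θ' with hΔ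
  set w : Fin d → ℝ := g θ - g θ' with hw
  -- action of Vt on vectors
  have hVtmul : ∀ v : Fin d → ℝ, Vt *ᵥ v = lam • v + ∑ s, (x s ⬝ᵥ v) • x s := by
    intro v
    rw [hVt, Matrix.add_mulVec, Matrix.smul_mulVec, Matrix.one_mulVec, my_sum_mulVec]
    congr 1
    exact Finset.sum_congr rfl fun s _ => my_vecMulVec_mulVec _ _ _
  have hquad : ∀ v : Fin d → ℝ, v ⬝ᵥ Vt *ᵥ v = lam * (v ⬝ᵥ v) + ∑ s, (v ⬝ᵥ x s) ^ 2 := by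
    intro v
    rw [hVtmul v, dotProduct_add, my_dotProduct_sum]
    congr 1
    · rw [dotProduct_smul]; simp
    · exact Finset.sum_congr rfl fun s _ => by
        rw [dotProduct_smul, dotProduct_comm]; simp [sq]
  -- Vt is positive definite
  have hHerm : Vt.IsHermitian := by
    show Vtᴴ = Vt
    ext i j
    simp only [hVt, Matrix.conjTranspose_apply, Matrix.add_apply, Matrix.smul_apply,
      Matrix.one_apply, Matrix.sum_apply, Matrix.vecMulVec_apply, star_trivial,
      smul_eq_mul]
    have hxsum : ∑ s, x s j * x s i = ∑ s, x s i * x s j :=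
      Finset.sum_congr rfl fun s _ => mul_comm _ _
    rw [hxsum]
    rcases eq_or_ne i j with h | h
    · subst h; rfl
    · simp [h, h.symm]
  have hdProd_nonneg : ∀ v : Fin d → ℝ, 0 ≤ v ⬝ᵥ v := fun v =>
    Finset.sum_nonneg fun i _ => mul_self_nonneg _
  have hPD : Vt.PosDef := by
    refine Matrix.PosDef.of_dotProduct_mulVec_pos hHerm fun v hv => ?_
    have hvv : 0 < v ⬝ᵥ v :=
      lt_of_le_of_ne (hdProd_nonneg v) (fun h => hv (dotProduct_self_eq_zero.mp h.symm))
    have : (star v : Fin d → ℝ) = v := by simp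
    rw [this, hquad v]
    have : 0 ≤ ∑ s, (v ⬝ᵥ x s) ^ 2 := Finset.sum_nonneg fun s _ => sq_nonneg _
    nlinarith
  have hinv : Vt * Vt⁻¹ = 1 := Matrix.mul_nonsing_inv _ hPD.det_pos.ne'.isUnit
  -- square root of Vt
  set S : Matrix (Fin d) (Fin d) ℝ := (open scoped MatrixOrder in CFC.sqrt Vt) with hS
  have hSmul : S * S = Vt := by
    open scoped MatrixOrder in exact CFC.sqrt_mul_sqrt_self Vt hPD.posSemidef.nonneg
  have hSt : Sᵀ = S := by
    have h : Sᴴ = S := by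
      open scoped MatrixOrder in exact (CFC.sqrt_nonneg Vt).posSemidef.1
    ext i j
    have := congrFun (congrFun h i) j
    simpa [Matrix.conjTranspose_apply] using this
  have hfact : ∀ p q : Fin d → ℝ, p ⬝ᵥ Vt *ᵥ q = (S *ᵥ p) ⬝ᵥ (S *ᵥ q) := by
    intro p q
    conv_lhs => rw [← hSmul]
    rw [← Matrix.mulVec_mulVec, Matrix.dotProduct_mulVec, ← Matrix.mulVec_transpose, hSt]
  set z : Fin d → ℝ := Vt⁻¹ *ᵥ w with hz
  have hVz : Vt *ᵥ z = w := by rw [hz, Matrix.mulVec_mulVec, hinv, Matrix.one_mulVec]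
  set Q : ℝ := Δ ⬝ᵥ Vt *ᵥ Δ with hQ
  set R : ℝ := w ⬝ᵥ Vt⁻¹ *ᵥ w with hR
  have hQ0 : 0 ≤ Q := by
    rw [hQ, hfact]; exact hdProd_nonneg _
  -- w in terms of Δ
  have hsum : (∑ s, f (θ ⬝ᵥ x s) • x s) - (∑ s, f (θ' ⬝ᵥ x s) • x s)
      = ∑ s, (f (θ ⬝ᵥ x s) - f (θ' ⬝ᵥ x s)) • x s := by
    rw [← Finset.sum_sub_distrib]
    exact Finset.sum_congr rfl fun s _ => (sub_smul _ _ _).symm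
  have hwval : w = lam • Δ + ∑ s, (f (θ ⬝ᵥ x s) - f (θ' ⬝ᵥ x s)) • x s := by
    rw [hw, hg θ, hg θ', add_sub_add_comm, hsum, hΔ, smul_sub]
  -- key inequality 1 : c₁ * Q ≤ Δ ⬝ᵥ w
  have hdw : Δ ⬝ᵥ w = lam * (Δ ⬝ᵥ Δ) + ∑ s, (f (θ ⬝ᵥ x s) - f (θ' ⬝ᵥ x s)) * (Δ ⬝ᵥ x s) := by
    rw [hwval, dotProduct_add, my_dotProduct_sum]
    congr 1
    · rw [dotProduct_smul]; simp
    · exact Finset.sum_congr rfl fun s _ => by rw [dotProduct_smul]; simp [mul_comm]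
  have key1 : c₁ * Q ≤ Δ ⬝ᵥ w := by
    rw [hdw, hQ, hquad Δ, mul_add, Finset.mul_sum]
    have h1 : c₁ * (lam * (Δ ⬝ᵥ Δ)) ≤ lam * (Δ ⬝ᵥ Δ) := by
      have := mul_nonneg (by linarith : (0:ℝ) ≤ 1 - c₁)
        (mul_nonneg hlam.le (hdProd_nonneg Δ))
      nlinarith
    refine add_le_add h1 (Finset.sum_le_sum fun s _ => ?_)
    have hsub : θ ⬝ᵥ x s - θ' ⬝ᵥ x s = Δ ⬝ᵥ x s := by rw [hΔ, sub_dotProduct]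
    have := my_mvt hf hderiv (θ ⬝ᵥ x s) (θ' ⬝ᵥ x s)
    rw [hsub] at this
    linarith
  -- key inequality 2 : Δ ⬝ᵥ w ≤ √Q * √R
  have key2 : Δ ⬝ᵥ w ≤ Real.sqrt Q * Real.sqrt R := by
    have e1 : Δ ⬝ᵥ w = (S *ᵥ Δ) ⬝ᵥ (S *ᵥ z) := by rw [← hVz, hfact]
    have e2 : Q = (S *ᵥ Δ) ⬝ᵥ (S *ᵥ Δ) := by rw [hQ, hfact]
    have e3 : R = (S *ᵥ z) ⬝ᵥ (S *ᵥ z) := by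
      rw [← hfact, hVz, dotProduct_comm, hR, hz]
    rw [e1, e2, e3]
    exact my_cs _ _
  have hchain : c₁ * Q ≤ Real.sqrt Q * Real.sqrt R := key1.trans key2
  by_cases hQz : Q = 0
  · rw [hQz]
    simp [Real.sqrt_nonneg]
  · have hQpos : 0 < Q := lt_of_le_of_ne hQ0 (Ne.symm hQz)
    have h1 : 0 < Real.sqrt Q := Real.sqrt_pos.mpr hQpos
    have h2 : c₁ * Real.sqrt Q * Real.sqrt Q ≤ Real.sqrt R * Real.sqrt Q := by
      rw [mul_assoc, Real.mul_self_sqrt hQ0]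
      nlinarith
    exact le_of_mul_le_mul_right h2 h1
end
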